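/- For every real number x ≥ 3, one has ∫_{2}^{x} θ(t) / (t · (log t)^2) dt ≤ ( ((x−1)/2)·log 2 ) / log x + 1. -/

import Mathlib

/-!
Summation by parts gives `∫_2^{N+1} θ(t) / (t log² t) dt = π(N) - θ(N) / log (N + 1)`, and the
integral is increasing in `x`, so for `N = ⌊x⌋` it suffices to show
`(π(N) - 1) log (N + 1) - θ(N) ≤ (N - 1)/2 · log 2`. Passing from `N` to `N + 1` increases the
left side by `(π(N+1) - 1) log ((N+2)/(N+1)) ≤ (π(N+1) - 1)/(N+1)`, which the sieve bound
`3 π(n) ≤ n + 9` (only two residues mod 6 contain primes `> 3`) keeps below `(log 2)/2` once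
`N ≥ 152`. For `N ≤ 152` the inequality is exponentiated and decided in `ℕ`.
-/

/-- Chebyshev's first function `θ(x) := ∑_{p ≤ x} log p`. -/
noncomputable def chebyshevTheta (x : ℝ) : ℝ :=
  ∑ p ∈ Finset.filter Nat.Prime (Finset.range (⌊x⌋₊ + 1)), Real.log p

open Finset MeasureTheory intervalIntegral Chebyshev
open scoped Nat.Prime

lemma chebyshevTheta_eq_theta : chebyshevTheta = θ := by
  ext x
  rw [theta_eq_sum_primesLE]
  rfl

lemma theta_natCast_add_one (n : ℕ) :
    θ (n + 1) = θ n + ((π (n + 1) : ℝ) - π n) * Real.log (n + 1) := by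
  have h := theta_eq_sum_primesLE_log (n + 1)
  push_cast at h
  rw [h, theta_eq_sum_primesLE_log, ← Nat.primesLE_card_eq_primeCounting,
    ← Nat.primesLE_card_eq_primeCounting, Nat.primesLE_succ]
  split_ifs
  · rw [sum_insert (Nat.notMem_primesLE n), card_insert_of_notMem (Nat.notMem_primesLE n)]
    push_cast
    ring
  · simp

lemma continuousOn_inv_mul_log_sq :
    ContinuousOn (fun t => (t * Real.log t ^ 2)⁻¹) (Set.Ioi 1) := by
  refine ContinuousOn.inv₀ ?_ fun t ht => ?_
  · refine continuousOn_id.mul ((Real.continuousOn_log.mono fun t ht => ?_).pow 2)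
    exact (zero_lt_one.trans ht).ne'
  · have := Real.log_pos ht
    have : (0 : ℝ) < t := by linarith [Set.mem_Ioi.mp ht]
    positivity

lemma uIcc_subset_Ioi_one {a b : ℝ} (ha : 1 < a) (hab : a ≤ b) :
    Set.uIcc a b ⊆ Set.Ioi 1 := by
  rw [Set.uIcc_of_le hab]
  exact (Set.Icc_subset_Ioi_iff hab).2 ha

lemma integral_inv_mul_log_sq {a b : ℝ} (ha : 1 < a) (hab : a ≤ b) :
    ∫ t in a..b, (t * Real.log t ^ 2)⁻¹ = (Real.log a)⁻¹ - (Real.log b)⁻¹ := by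
  have hderiv : ∀ t ∈ Set.uIcc a b,
      HasDerivAt (fun u => -(Real.log u)⁻¹) (t * Real.log t ^ 2)⁻¹ t := by
    intro t ht
    rw [Set.uIcc_of_le hab] at ht
    have hlog : 0 < Real.log t := Real.log_pos (ha.trans_le ht.1)
    refine ((Real.hasDerivAt_log (by linarith [ht.1])).inv hlog.ne').neg.congr_deriv ?_
    rw [neg_div, neg_neg, div_eq_mul_inv, mul_inv]
  rw [integral_eq_sub_of_hasDerivAt hderiv
    (continuousOn_inv_mul_log_sq.mono (uIcc_subset_Ioi_one ha hab)).intervalIntegrable]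
  ring

lemma intervalIntegrable_theta_div {a b : ℝ} (ha : 1 < a) (hab : a ≤ b) :
    IntervalIntegrable (fun t => θ t / (t * Real.log t ^ 2)) volume a b := by
  simp only [div_eq_mul_inv]
  exact theta_mono.intervalIntegrable.mul_continuousOn
    (continuousOn_inv_mul_log_sq.mono (uIcc_subset_Ioi_one ha hab))

lemma integral_theta_div_mono {b c : ℝ} (hb : 2 ≤ b) (hbc : b ≤ c) :
    ∫ t in (2 : ℝ)..b, θ t / (t * Real.log t ^ 2) ≤
      ∫ t in (2 : ℝ)..c, θ t / (t * Real.log t ^ 2) := by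
  refine integral_mono_interval le_rfl hb hbc ?_
    (intervalIntegrable_theta_div one_lt_two (hb.trans hbc))
  refine ae_restrict_of_forall_mem measurableSet_Ioc fun t ht => ?_
  have : 0 < t := by linarith [ht.1]
  exact div_nonneg (theta_nonneg t) (by positivity)

lemma integral_theta_div_natCast_add_one (n : ℕ) (hn : 2 ≤ n) :
    ∫ t in (n : ℝ)..(n + 1), θ t / (t * Real.log t ^ 2) =
      θ n * ((Real.log n)⁻¹ - (Real.log (n + 1))⁻¹) := by
  have hn' : (1 : ℝ) < n := by exact_mod_cast hn
  rw [← integral_inv_mul_log_sq hn' (by linarith), ← intervalIntegral.integral_const_mul]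
  refine integral_congr_ae ?_
  filter_upwards [volume.ae_ne ((n : ℝ) + 1)] with t hne ht
  rw [Set.uIoc_of_le (by linarith)] at ht
  have hfloor : ⌊t⌋₊ = n :=
    Nat.floor_eq_iff (by linarith [ht.1]) |>.mpr ⟨ht.1.le, lt_of_le_of_ne ht.2 hne⟩
  rw [theta_eq_theta_coe_floor t, hfloor, div_eq_mul_inv]

lemma integral_theta_div_eq (N : ℕ) (hN : 1 ≤ N) :
    ∫ t in (2 : ℝ)..(N + 1), θ t / (t * Real.log t ^ 2) = π N - θ N / Real.log (N + 1) := by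
  induction N, hN using Nat.le_induction with
  | base => norm_num [theta_one]
  | succ n hn ih =>
    have hn' : (1 : ℝ) ≤ n := by exact_mod_cast hn
    push_cast
    rw [← integral_add_adjacent_intervals (b := (n : ℝ) + 1)
      (intervalIntegrable_theta_div one_lt_two (by linarith))
      (intervalIntegrable_theta_div (by linarith) (by linarith)), ih]
    have hstep := integral_theta_div_natCast_add_one (n + 1) (by omega)
    push_cast at hstep
    rw [hstep, theta_natCast_add_one]
    have : Real.log (n + 1) ≠ 0 := (Real.log_pos (by linarith)).ne'
    field_simp
    ring

lemma one_le_primeCounting {n : ℕ} (hn : 2 ≤ n) : 1 ≤ π n :=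
  (show 1 = π 2 by decide).trans_le (Nat.monotone_primeCounting hn)

lemma three_mul_primeCounting_le (n : ℕ) : 3 * π n ≤ n + 9 := by
  have hπ6 : π 6 = 3 := by decide
  obtain hn | hn := lt_or_ge n 6
  · have := Nat.monotone_primeCounting hn.le
    omega
  · obtain ⟨m, rfl⟩ := Nat.exists_eq_add_of_le hn
    have h := Nat.primeCounting_add_le (a := 6) (by norm_num) le_rfl m
    rw [hπ6, show Nat.totient 6 = 2 by decide] at h
    omega

lemma primeCounting_sub_one_le {n : ℕ} (hn : 152 ≤ n) :
    (π n : ℝ) - 1 ≤ n / 2 * Real.log 2 := by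
  have hπ : 3 * (π n : ℝ) ≤ n + 9 := by exact_mod_cast three_mul_primeCounting_le n
  have hn' : (152 : ℝ) ≤ n := by exact_mod_cast hn
  have hlog2 : n / 2 * 0.6931471803 ≤ n / 2 * Real.log 2 := by
    gcongr
    exact Real.log_two_gt_d9.le
  linarith

/-- Equals `∑_{p ≤ n} log ((n + 1) / p) - log (n + 1)`. -/
noncomputable def deficit (n : ℕ) : ℝ := ((π n : ℝ) - 1) * Real.log (n + 1) - θ n

lemma deficit_succ (n : ℕ) :
    deficit (n + 1) =
      deficit n + ((π (n + 1) : ℝ) - 1) * Real.log ((n + 1 + 1) / (n + 1)) := by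
  unfold deficit
  push_cast
  rw [theta_natCast_add_one, Real.log_div (by positivity) (by positivity)]
  ring

lemma deficit_succ_le {n : ℕ} (hn : 1 ≤ n)
    (hπ : (π (n + 1) : ℝ) - 1 ≤ (n + 1) / 2 * Real.log 2) :
    deficit (n + 1) ≤ deficit n + Real.log 2 / 2 := by
  have hπ1 : (1 : ℝ) ≤ π (n + 1) := by exact_mod_cast one_le_primeCounting (by omega)
  have hlog : Real.log ((n + 1 + 1) / (n + 1)) ≤ (n + 1 : ℝ)⁻¹ := by
    refine (Real.log_le_sub_one_of_pos (by positivity)).trans_eq ?_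
    field_simp
    ring
  have hincr : ((π (n + 1) : ℝ) - 1) * Real.log ((n + 1 + 1) / (n + 1)) ≤ Real.log 2 / 2 :=
    calc _ ≤ ((π (n + 1) : ℝ) - 1) * (n + 1 : ℝ)⁻¹ := by gcongr
      _ ≤ (n + 1) / 2 * Real.log 2 * (n + 1 : ℝ)⁻¹ := by gcongr
      _ = Real.log 2 / 2 := by field_simp
  rw [deficit_succ]
  linarith

lemma pow_primeCounting_le_primorial_sq_mul_two_pow :
    ∀ n < 153, 2 ≤ n → (n + 1) ^ (2 * (π n - 1)) ≤ primorial n ^ 2 * 2 ^ (n - 1) := by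
  decide +kernel

lemma deficit_le_of_pow_le {n : ℕ} (hn : 2 ≤ n)
    (h : (n + 1) ^ (2 * (π n - 1)) ≤ primorial n ^ 2 * 2 ^ (n - 1)) :
    deficit n ≤ (n - 1) / 2 * Real.log 2 := by
  have hπ := one_le_primeCounting hn
  have h' : ((n + 1 : ℝ)) ^ (2 * (π n - 1)) ≤ (primorial n : ℝ) ^ 2 * 2 ^ (n - 1) := by
    exact_mod_cast h
  have hP : (primorial n : ℝ) ≠ 0 := by exact_mod_cast (primorial_pos n).ne'
  have hlog := Real.log_le_log (by positivity) h'
  rw [Real.log_pow, Real.log_mul (by positivity) (by positivity), Real.log_pow,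
    Real.log_pow] at hlog
  push_cast [hπ, (by omega : 1 ≤ n)] at hlog
  rw [deficit, theta_eq_log_primorial, Nat.floor_natCast]
  linarith

lemma deficit_le {n : ℕ} (hn : 2 ≤ n) : deficit n ≤ (n - 1) / 2 * Real.log 2 := by
  obtain hsmall | hlarge := lt_or_ge n 152
  · exact deficit_le_of_pow_le hn
      (pow_primeCounting_le_primorial_sq_mul_two_pow n (by omega) hn)
  induction n, hlarge using Nat.le_induction with
  | base =>
    exact deficit_le_of_pow_le hn
      (pow_primeCounting_le_primorial_sq_mul_two_pow 152 (by norm_num) hn)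
  | succ n hn152 ih =>
    have hstep := deficit_succ_le (n := n) (by omega)
      (by exact_mod_cast primeCounting_sub_one_le (n := n + 1) (by omega))
    push_cast
    linarith [ih (by omega)]

theorem theta_integral_bound (x : ℝ) (hx : 3 ≤ x) :
    ∫ t in (2:ℝ)..x, chebyshevTheta t / (t * (Real.log t) ^ 2) ≤
      (((x - 1) / 2) * Real.log 2) / Real.log x + 1 := by
  rw [chebyshevTheta_eq_theta]
  set N := ⌊x⌋₊
  have hN : 2 ≤ N := Nat.le_floor (by norm_num; linarith)
  have hNx : (N : ℝ) ≤ x := Nat.floor_le (by linarith)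
  have hxN : x < N + 1 := Nat.lt_floor_add_one x
  have hlogx : 0 < Real.log x := Real.log_pos (by linarith)
  have hlogN : 0 < Real.log (N + 1) := by linarith [Real.log_lt_log (by linarith) hxN]
  have hx1 : 0 ≤ (x - 1) / 2 * Real.log 2 :=
    mul_nonneg (by linarith) (Real.log_pos one_lt_two).le
  calc _ ≤ (π N : ℝ) - θ N / Real.log (N + 1) :=
        (integral_theta_div_mono (by linarith) hxN.le).trans_eq
          (integral_theta_div_eq N (by omega))
    _ = deficit N / Real.log (N + 1) + 1 := by
      unfold deficit
      field_simp
      ring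
    _ ≤ ((N - 1) / 2 * Real.log 2) / Real.log (N + 1) + 1 := by gcongr; exact deficit_le hN
    _ ≤ ((x - 1) / 2 * Real.log 2) / Real.log x + 1 := by gcongr
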